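/- arXiv:2105.07034 — 4 statements merged into one kernel-verified Lean document; each statement's English description precedes it below -/
import Mathlib

section
/- Fix an integer x ≥ 1 and y ∈ ℕ. For each n, let u_1, …, u_{t(n)} be chosen independently and uniformly at random from [n] = {1,…,n}, where t(n) = ⌊n^{(x−1)/x} · ω(n)⌋, ω(n) is any function tending to infinity as n → ∞, and t(n) = o(n), and let X_{t(n)}^{(x)} be the number of i ∈ [n] chosen exactly x times. Then the probability that X_{t(n)}^{(x)} ≥ y tends to 1 as n → ∞. -/
/-!
Second moment method. Let `X` be the number of elements of `[n]` chosen exactly `x` times.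
Sorting the maps `[t] → [n]` by their fibres gives `E X = n C(t,x) (n-1)^(t-x) / n^t` and
`E X(X-1) = n(n-1) C(t,x) C(t-x,x) (n-2)^(t-2x) / n^t`, and since `n(n-2) ≤ (n-1)²` the latter is
at most `(n/(n-1))^(2x) (E X)²`. Hence `Var X ≤ E X + ((n/(n-1))^(2x) - 1) (E X)² = o((E X)²)` as
soon as `E X → ∞`, and Chebyshev's inequality gives `P(X < y) → 0`. For `t = ⌊n^((x-1)/x) ω⌋ = o(n)`
we have `E X ≥ (t/2)^x / x! · (1 - t/n) / n^(x-1) ≥ ω^x / (4^x x!) · (1 - t/n) → ∞`.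
-/

open Filter

namespace UniformChoices

/-- Given `t` independent uniform choices `f : Fin t → Fin n` from `[n]`, the number of
elements of `[n]` chosen exactly `x` times. -/
def countExact (n t : ℕ) (f : Fin t → Fin n) (x : ℕ) : ℕ :=
  (Finset.univ.filter fun i : Fin n =>
    (Finset.univ.filter fun j : Fin t => f j = i).card = x).card

/-- The expectation of `X_t^{(x)}`, the number of elements of `[n]` chosen exactly `x`
times among `t` independent uniform choices from `[n]`. -/
noncomputable def expCount (n t x : ℕ) : ℝ :=
  (∑ f : Fin t → Fin n, (countExact n t f x : ℝ)) / (n : ℝ) ^ t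

open scoped Classical in
/-- The probability that `X_t^{(x)}` satisfies the predicate `p`, for `t` independent
uniform choices from `[n]`. -/
noncomputable def probCount (n t x : ℕ) (p : ℕ → Prop) : ℝ :=
  ((Finset.univ.filter fun f : Fin t → Fin n => p (countExact n t f x)).card : ℝ) /
    (n : ℝ) ^ t

end UniformChoices

open Finset Fintype Topology

section FiberCounting

variable {α β : Type*} [Fintype α] [DecidableEq α] [Fintype β] [DecidableEq β]

theorem card_filter_fiber_eq (b : β) (s : Finset α) :
    #{f : α → β | ({a | f a = b} : Finset α) = s} = (card β - 1) ^ (card α - #s) := by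
  have : ({f : α → β | ({a | f a = b} : Finset α) = s} : Finset (α → β)) =
      piFinset fun a => if a ∈ s then {b} else {b}ᶜ := by
    ext f
    simp only [mem_filter, mem_univ, true_and, mem_piFinset, Finset.ext_iff]
    refine forall_congr' fun a => ?_
    by_cases ha : a ∈ s <;> simp [ha, eq_comm]
  rw [this, card_piFinset]
  simp [apply_ite, prod_ite, filter_not, card_univ_sdiff, card_compl]

theorem card_filter_card_fiber_eq (b : β) (k : ℕ) :
    #{f : α → β | #{a | f a = b} = k} = (card α).choose k * (card β - 1) ^ (card α - k) := by
  calc #{f : α → β | #{a | f a = b} = k}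
      = #{f : α → β | ({a | f a = b} : Finset α) ∈ powersetCard k univ} := by
        simp only [mem_powersetCard_univ]
    _ = ∑ s ∈ powersetCard k univ, #{f : α → β | ({a | f a = b} : Finset α) = s} :=
        (sum_card_fiberwise_eq_card_filter _ _ _).symm
    _ = _ := by
        rw [sum_const_nat fun s hs => by rw [card_filter_fiber_eq, mem_powersetCard_univ.1 hs],
          card_powersetCard, card_univ]

theorem card_filter_fiber_eq_and_fiber_eq {b b' : β} (hb : b ≠ b') {s s' : Finset α}
    (hs : Disjoint s s') :
    #{f : α → β | ({a | f a = b} : Finset α) = s ∧ ({a | f a = b'} : Finset α) = s'} =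
      (card β - 2) ^ (card α - (#s + #s')) := by
  have : ({f : α → β | ({a | f a = b} : Finset α) = s ∧ ({a | f a = b'} : Finset α) = s'} :
      Finset (α → β)) =
      piFinset fun a => if a ∈ s then {b} else if a ∈ s' then {b'} else {b, b'}ᶜ := by
    ext f
    simp only [mem_filter, mem_univ, true_and, mem_piFinset, Finset.ext_iff, ← forall_and]
    refine forall_congr' fun a => ?_
    have : a ∈ s → a ∉ s' := fun h => disjoint_left.1 hs h
    by_cases ha : a ∈ s <;> by_cases ha' : a ∈ s' <;> simp [ha, ha'] <;> grind
  rw [this, card_piFinset]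
  have hcard : ∀ a, #(if a ∈ s then {b} else if a ∈ s' then {b'} else ({b, b'}ᶜ : Finset β)) =
      if a ∈ s ∪ s' then 1 else card β - 2 := by
    intro a
    by_cases ha : a ∈ s <;> by_cases ha' : a ∈ s' <;> simp [ha, ha', card_compl, hb, Nat.sub_sub]
  simp only [hcard, prod_ite, prod_const_one, one_mul, prod_const, filter_not, filter_mem_eq_inter,
    univ_inter, card_univ_sdiff, card_union_of_disjoint hs]

theorem card_filter_card_fiber_eq_and_card_fiber_eq {b b' : β} (hb : b ≠ b') (k l : ℕ) :
    #{f : α → β | #{a | f a = b} = k ∧ #{a | f a = b'} = l} =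
      (card α).choose k * (card α - k).choose l * (card β - 2) ^ (card α - (k + l)) := by
  set T := (powersetCard k (univ : Finset α)).sigma fun s => powersetCard l sᶜ
  have hfib : ∀ p ∈ T, #{f : α → β |
      (⟨({a | f a = b} : Finset α), ({a | f a = b'} : Finset α)⟩ : Σ _ : Finset α, Finset α) = p} =
        (card β - 2) ^ (card α - (k + l)) := by
    rintro ⟨s, s'⟩ hp
    obtain ⟨hs, hs'⟩ := mem_sigma.1 hp
    rw [mem_powersetCard_univ] at hs
    rw [mem_powersetCard, subset_compl_iff_disjoint_left] at hs'
    simp only [Sigma.mk.inj_iff, heq_eq_eq]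
    rw [card_filter_fiber_eq_and_fiber_eq hb hs'.1, hs, hs'.2]
  calc #{f : α → β | #{a | f a = b} = k ∧ #{a | f a = b'} = l}
      = #{f : α → β | (⟨({a | f a = b} : Finset α), ({a | f a = b'} : Finset α)⟩ :
          Σ _ : Finset α, Finset α) ∈ T} :=
        congrArg card <| filter_congr fun f _ => by simp +contextual [T, subset_iff, hb.symm]
    _ = _ := by
        rw [← sum_card_fiberwise_eq_card_filter, sum_const_nat hfib, Finset.card_sigma,
          sum_const_nat fun s hs => by
            rw [card_powersetCard, card_compl, mem_powersetCard_univ.1 hs],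
          card_powersetCard, card_univ]

theorem sum_card_filter_card_fiber_eq (k : ℕ) :
    ∑ f : α → β, #{b | #{a | f a = b} = k} =
      card β * ((card α).choose k * (card β - 1) ^ (card α - k)) := by
  calc _ = ∑ b : β, #{f : α → β | #{a | f a = b} = k} :=
        sum_card_bipartiteAbove_eq_sum_card_bipartiteBelow _
    _ = _ := by simp_rw [card_filter_card_fiber_eq, sum_const, card_univ, smul_eq_mul]

theorem sum_card_filter_card_fiber_eq_sq (k : ℕ) :
    ∑ f : α → β, #{b | #{a | f a = b} = k} ^ 2 =
      card β * ((card α).choose k * (card β - 1) ^ (card α - k)) +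
        card β * (card β - 1) *
          ((card α).choose k * (card α - k).choose k * (card β - 2) ^ (card α - (k + k))) := by
  have hsq : ∀ f : α → β, #{b | #{a | f a = b} = k} ^ 2 =
      #{p : β × β | #{a | f a = p.1} = k ∧ #{a | f a = p.2} = k} := by
    intro f
    rw [sq, ← card_product, ← filter_product, univ_product_univ]
  have hpair : ∀ b,
      ∑ b' ∈ univ.erase b, #{f : α → β | #{a | f a = b} = k ∧ #{a | f a = b'} = k} =
        (card β - 1) *
          ((card α).choose k * (card α - k).choose k * (card β - 2) ^ (card α - (k + k))) := by
    intro b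
    rw [sum_const_nat fun b' hb' => card_filter_card_fiber_eq_and_card_fiber_eq
      (Ne.symm (ne_of_mem_erase hb')) k k, card_erase_of_mem (mem_univ b), card_univ]
  calc _ = ∑ p : β × β, #{f : α → β | #{a | f a = p.1} = k ∧ #{a | f a = p.2} = k} := by
        rw [Finset.sum_congr rfl fun f _ => hsq f]
        exact sum_card_bipartiteAbove_eq_sum_card_bipartiteBelow _
    _ = _ := by
      rw [Fintype.sum_prod_type,
        Finset.sum_congr rfl fun b _ => (add_sum_erase _ _ (mem_univ b)).symm]
      simp_rw [and_self, card_filter_card_fiber_eq, sum_add_distrib, hpair, sum_const, card_univ,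
        smul_eq_mul, mul_assoc]

end FiberCounting

/-- Chebyshev's inequality for the uniform distribution on `Ω`. -/
theorem card_filter_lt_div_card_le {Ω : Type*} [Fintype Ω] [Nonempty Ω] (X : Ω → ℝ) {a : ℝ}
    (ha : a < (∑ ω, X ω) / card Ω) :
    (#{ω | X ω < a} : ℝ) / card Ω ≤
      ((∑ ω, X ω ^ 2) / card Ω - ((∑ ω, X ω) / card Ω) ^ 2) / ((∑ ω, X ω) / card Ω - a) ^ 2 := by
  set N : ℝ := card Ω
  set m := (∑ ω, X ω) / N
  have hN : 0 < N := by positivity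
  have hma : 0 < m - a := sub_pos.2 ha
  have hdev : #{ω | X ω < a} * (m - a) ^ 2 ≤ ∑ ω, (X ω - m) ^ 2 := by
    calc #{ω | X ω < a} * (m - a) ^ 2 ≤ ∑ ω ∈ {ω | X ω < a}, (X ω - m) ^ 2 := by
          rw [← nsmul_eq_mul]
          refine card_nsmul_le_sum _ _ _ fun ω hω => ?_
          have : X ω < a := (mem_filter.1 hω).2
          nlinarith
      _ ≤ ∑ ω, (X ω - m) ^ 2 :=
          sum_le_sum_of_subset_of_nonneg (subset_univ _) fun ω _ _ => sq_nonneg _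
  have hvar : ∑ ω, (X ω - m) ^ 2 = ∑ ω, X ω ^ 2 - N * m ^ 2 := by
    have hsum : ∑ ω, X ω = N * m := (mul_div_cancel₀ _ hN.ne').symm
    simp only [sub_sq, sum_add_distrib, sum_sub_distrib, ← sum_mul, ← mul_sum, sum_const,
      card_univ, nsmul_eq_mul, hsum]
    ring
  rw [div_le_div_iff₀ hN (by positivity)]
  rw [hvar] at hdev
  calc _ ≤ ∑ ω, X ω ^ 2 - N * m ^ 2 := hdev
    _ = _ := by field_simp

/-- `E[X(X-1)] ≤ (n/(n-1))^(2x) (E X)²` for `X = countExact n t · x`, with denominators cleared. -/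
theorem pred_mul_choose_mul_pow_le (n t x : ℕ) :
    (n - 1) * (t.choose x * (t - x).choose x * (n - 2) ^ (t - (x + x))) * n ^ t *
        (n - 1) ^ (2 * x) ≤
      n * (t.choose x * (n - 1) ^ (t - x)) ^ 2 * n ^ (2 * x) := by
  rcases lt_or_ge t (x + x) with h | h
  · simp [Nat.choose_eq_zero_of_lt (by omega : t - x < x)]
  obtain ⟨m, rfl⟩ := Nat.exists_eq_add_of_le' h
  have hsq : (n - 2) * n ≤ (n - 1) ^ 2 := by
    rcases Nat.lt_or_ge n 2 with hn | hn
    · interval_cases n <;> simp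
    · obtain ⟨k, rfl⟩ := Nat.exists_eq_add_of_le' hn
      rw [Nat.add_sub_cancel, show k + 2 - 1 = k + 1 by omega]
      nlinarith
  rw [show m + (x + x) - x = m + x by omega, Nat.add_sub_cancel]
  set C := (m + (x + x)).choose x
  calc _ = (n ^ (2 * x) * (n - 1) ^ (2 * x) * C) *
        ((n - 1) * (m + x).choose x * ((n - 2) * n) ^ m) := by ring
    _ ≤ (n ^ (2 * x) * (n - 1) ^ (2 * x) * C) * (n * C * ((n - 1) ^ 2) ^ m) := by
        gcongr
        · omega
        · exact Nat.choose_le_choose x (by omega)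
    _ = _ := by ring

theorem rpow_sub_one_div_pow {x : ℕ} (hx : 1 ≤ x) {n : ℝ} (hn : 0 ≤ n) :
    (n ^ (((x : ℝ) - 1) / x)) ^ x = n ^ (x - 1) := by
  rw [← Real.rpow_natCast, ← Real.rpow_mul hn, div_mul_cancel₀ _ (by positivity),
    ← Nat.cast_pred hx, Real.rpow_natCast]

theorem tendsto_add_sub_one_mul_sq_div_sub_sq {ι : Type*} {l : Filter ι} {μ ρ : ι → ℝ} (y : ℝ)
    (hμ : Tendsto μ l atTop) (hρ : Tendsto ρ l (𝓝 1)) :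
    Tendsto (fun i => (μ i + (ρ i - 1) * μ i ^ 2) / (μ i - y) ^ 2) l (𝓝 0) := by
  have hpos : ∀ᶠ i in l, 0 < μ i ∧ 0 < μ i - y := by
    filter_upwards [hμ.eventually_gt_atTop 0, hμ.eventually_gt_atTop y] with i h0 hy
    exact ⟨h0, sub_pos.2 hy⟩
  have hratio : Tendsto (fun i => μ i / (μ i - y)) l (𝓝 1) := by
    have : Tendsto (fun i => (1 - y / μ i)⁻¹) l (𝓝 1) := by
      simpa using ((hμ.const_div_atTop y).const_sub 1).inv₀ (by simp)
    exact this.congr' (hpos.mono fun i ⟨h0, h1⟩ => by field_simp)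
  have : Tendsto (fun i => (μ i / (μ i - y)) ^ 2 * ((μ i)⁻¹ + (ρ i - 1))) l (𝓝 0) := by
    simpa using (hratio.pow 2).mul (hμ.inv_tendsto_atTop.add (hρ.sub_const 1))
  exact this.congr' (hpos.mono fun i ⟨h0, h1⟩ => by field_simp)

namespace UniformChoices

theorem sum_countExact (n t x : ℕ) :
    ∑ f : Fin t → Fin n, countExact n t f x = n * (t.choose x * (n - 1) ^ (t - x)) := by
  simpa [countExact] using sum_card_filter_card_fiber_eq (α := Fin t) (β := Fin n) x

theorem sum_countExact_sq (n t x : ℕ) :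
    ∑ f : Fin t → Fin n, countExact n t f x ^ 2 =
      n * (t.choose x * (n - 1) ^ (t - x)) +
        n * (n - 1) * (t.choose x * (t - x).choose x * (n - 2) ^ (t - (x + x))) := by
  simpa [countExact] using sum_card_filter_card_fiber_eq_sq (α := Fin t) (β := Fin n) x

theorem probCount_le_one (n t x : ℕ) (p : ℕ → Prop) : probCount n t x p ≤ 1 := by
  classical
  refine div_le_one_of_le₀ ?_ (by positivity)
  calc (#{f : Fin t → Fin n | p (countExact n t f x)} : ℝ) ≤ #(univ : Finset (Fin t → Fin n)) := by
        exact_mod_cast card_filter_le _ _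
    _ = n ^ t := by simp

theorem expCount_eq (n t x : ℕ) :
    expCount n t x = n * (t.choose x * (n - 1 : ℕ) ^ (t - x) : ℕ) / n ^ t := by
  rw [expCount, ← Nat.cast_sum, sum_countExact]
  push_cast
  ring

theorem sum_countExact_sq_div_le (n t x : ℕ) (hn : 2 ≤ n) :
    (∑ f : Fin t → Fin n, (countExact n t f x : ℝ) ^ 2) / n ^ t ≤
      expCount n t x + (n / (n - 1)) ^ (2 * x) * expCount n t x ^ 2 := by
  have hsq := sum_countExact_sq n t x
  have hkey := pred_mul_choose_mul_pow_le n t x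
  rw [expCount_eq, ← Nat.cast_pred (by omega)]
  generalize t.choose x * (n - 1) ^ (t - x) = A at hsq hkey ⊢
  generalize t.choose x * (t - x).choose x * (n - 2) ^ (t - (x + x)) = B at hsq hkey
  have ha : 0 < n - 1 := by omega
  generalize n - 1 = a at hsq hkey ha ⊢
  have hsqR : ∑ f : Fin t → Fin n, (countExact n t f x : ℝ) ^ 2 = n * A + n * a * B := by
    exact_mod_cast hsq
  have hkeyR : (a * B * n ^ t * a ^ (2 * x) : ℝ) ≤ n * A ^ 2 * n ^ (2 * x) := by exact_mod_cast hkey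
  have ha' : (0 : ℝ) < a := by exact_mod_cast ha
  have hn0 : (0 : ℝ) < n := by positivity
  rw [hsqR, add_div]
  gcongr _ + ?_
  calc (n * a * B / n ^ t : ℝ)
      = a * B * n ^ t * a ^ (2 * x) * (n / ((n ^ t) ^ 2 * a ^ (2 * x))) := by field_simp
    _ ≤ n * A ^ 2 * n ^ (2 * x) * (n / ((n ^ t) ^ 2 * a ^ (2 * x))) := by gcongr
    _ = (n / a) ^ (2 * x) * (n * A / n ^ t) ^ 2 := by rw [div_pow]; field_simp

theorem one_sub_div_sq_le_probCount (n t x y : ℕ) (hn : 2 ≤ n) (hy : (y : ℝ) < expCount n t x) :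
    1 - (expCount n t x + ((n / (n - 1)) ^ (2 * x) - 1) * expCount n t x ^ 2) /
        (expCount n t x - y) ^ 2 ≤ probCount n t x (fun c => y ≤ c) := by
  have : Nonempty (Fin n) := ⟨⟨0, by omega⟩⟩
  have hcard : (card (Fin t → Fin n) : ℝ) = n ^ t := by simp
  have hN : (0 : ℝ) < n ^ t := by positivity
  have hμ : (∑ f : Fin t → Fin n, (countExact n t f x : ℝ)) / card (Fin t → Fin n) =
      expCount n t x := by rw [hcard, expCount]
  have hcheb := card_filter_lt_div_card_le (fun f : Fin t → Fin n => (countExact n t f x : ℝ))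
    (a := y) (hμ ▸ hy)
  rw [hμ, hcard] at hcheb
  have hsplit : probCount n t x (fun c => y ≤ c) =
      1 - #{f : Fin t → Fin n | (countExact n t f x : ℝ) < y} / n ^ t := by
    have h := card_filter_add_card_filter_not (s := (univ : Finset (Fin t → Fin n)))
      (fun f => y ≤ countExact n t f x)
    simp only [not_le, card_univ, Fintype.card_fun, Fintype.card_fin] at h
    rw [probCount, eq_sub_iff_add_eq, ← add_div, div_eq_one_iff_eq hN.ne']
    simp only [Nat.cast_lt]
    norm_cast
    convert h
  rw [hsplit]
  gcongr 1 - ?_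
  refine hcheb.trans ?_
  gcongr
  linarith [sum_countExact_sq_div_le n t x hn]

theorem expCount_eq_choose_mul_pow (n t x : ℕ) (hn : n ≠ 0) (hx : 1 ≤ x) (hxt : x ≤ t) :
    expCount n t x = t.choose x * (1 - 1 / n : ℝ) ^ (t - x) / n ^ (x - 1) := by
  have hn' : (n : ℝ) ≠ 0 := by exact_mod_cast hn
  have hpow : (n : ℝ) ^ t = n ^ (x - 1) * n ^ (t - x) * n := by
    rw [← pow_add, ← pow_succ]; congr 1; omega
  rw [expCount_eq, hpow]
  push_cast [Nat.cast_pred (Nat.pos_of_ne_zero hn)]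
  rw [show (n : ℝ) - 1 = n * (1 - 1 / n) by field_simp, mul_pow]
  field_simp

theorem le_expCount (n t x : ℕ) (hx : 1 ≤ x) (hxt : 2 * x ≤ t) (htn : t ≤ n) :
    (t / 2 : ℝ) ^ x / x.factorial * (1 - t / n) / n ^ (x - 1) ≤ expCount n t x := by
  have hn : (0 : ℝ) < n := by norm_cast; omega
  rw [expCount_eq_choose_mul_pow n t x (by omega) hx (by omega)]
  have hchoose : (t / 2 : ℝ) ^ x / x.factorial ≤ t.choose x := by
    refine le_trans ?_ (Nat.pow_le_choose x t)
    gcongr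
    rw [div_le_iff₀ two_pos]
    norm_cast
    omega
  have hbernoulli : 1 - t / n ≤ (1 - 1 / n : ℝ) ^ (t - x) := by
    have hinv : 1 / (n : ℝ) ≤ 1 := by rw [div_le_one hn]; norm_cast; omega
    calc 1 - t / n ≤ 1 + ((t - x : ℕ) : ℝ) * (-(1 / n)) := by
          rw [mul_neg, mul_one_div, sub_eq_add_neg]
          gcongr
          exact_mod_cast Nat.sub_le t x
      _ ≤ (1 + -(1 / n : ℝ)) ^ (t - x) := one_add_mul_le_pow (by linarith) _
      _ = _ := by rw [← sub_eq_add_neg]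
  have : (0 : ℝ) ≤ 1 - t / n := by
    rw [sub_nonneg, div_le_one hn]; exact_mod_cast htn
  gcongr

theorem tendsto_expCount_floor_atTop {x : ℕ} (hx : 1 ≤ x) {ω : ℕ → ℝ}
    (hω : Tendsto ω atTop atTop)
    (hto : Tendsto (fun n : ℕ => (⌊(n : ℝ) ^ (((x : ℝ) - 1) / x) * ω n⌋₊ : ℝ) / n) atTop (𝓝 0)) :
    Tendsto (fun n : ℕ => expCount n ⌊(n : ℝ) ^ (((x : ℝ) - 1) / x) * ω n⌋₊ x) atTop atTop := by
  set r : ℕ → ℝ := fun n => (n : ℝ) ^ (((x : ℝ) - 1) / x) * ω n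
  set T : ℕ → ℕ := fun n => ⌊r n⌋₊
  have hr : Tendsto r atTop atTop := by
    refine tendsto_atTop_mono' atTop ?_ hω
    filter_upwards [eventually_ge_atTop 1, hω.eventually_ge_atTop 0] with n hn hωn
    refine le_mul_of_one_le_left hωn (Real.one_le_rpow (by exact_mod_cast hn) ?_)
    exact div_nonneg (by simpa using hx) (Nat.cast_nonneg x)
  have hbound : ∀ᶠ n : ℕ in atTop,
      ω n ^ x / (4 ^ x * x.factorial) * (1 - T n / n) ≤ expCount n (T n) x := by
    filter_upwards [eventually_gt_atTop 0, hto.eventually_lt_const one_pos,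
      (tendsto_nat_floor_atTop.comp hr).eventually_ge_atTop (2 * x), hr.eventually_ge_atTop 2]
      with n hn hTn hTx hr2
    have hn' : (0 : ℝ) < n := by exact_mod_cast hn
    rw [div_lt_one hn'] at hTn
    have hTn' : T n ≤ n := Nat.cast_le.1 hTn.le
    have hrx : r n ^ x = n ^ (x - 1) * ω n ^ x := by
      simp only [r]; rw [mul_pow, rpow_sub_one_div_pow hx hn'.le]
    have hrT : r n / 4 ≤ T n / 2 := by linarith [Nat.sub_one_lt_floor (r n)]
    have h1 : (0 : ℝ) ≤ 1 - T n / n := by rw [sub_nonneg, div_le_one hn']; exact hTn.le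
    calc ω n ^ x / (4 ^ x * x.factorial) * (1 - T n / n)
        = (r n / 4) ^ x / x.factorial * (1 - T n / n) / n ^ (x - 1) := by
          rw [div_pow, hrx]; field_simp
      _ ≤ (T n / 2) ^ x / x.factorial * (1 - T n / n) / n ^ (x - 1) := by
          gcongr
      _ ≤ expCount n (T n) x := le_expCount n (T n) x hx hTx hTn'
  have hlim : Tendsto (fun n : ℕ => ω n ^ x / (4 ^ x * x.factorial) * (1 - T n / n)) atTop atTop :=
    (((tendsto_pow_atTop (by omega)).comp hω).atTop_div_const (by positivity)).atTop_mul_pos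
      one_pos (by simpa using hto.const_sub 1)
  exact tendsto_atTop_mono' atTop hbound hlim

end UniformChoices

open UniformChoices in
/-- **Lemma 12(c).** Fix `x ≥ 1` and `y ∈ ℕ`, and let `ω → ∞`. With
`t(n) = ⌊n^{(x-1)/x} ω(n)⌋` independent uniform choices from `[n]`, provided
`t(n) = o(n)`, a.a.s. at least `y` elements of `[n]` are chosen exactly `x` times. -/
theorem count_exact_ge_aas (x : ℕ) (hx : 1 ≤ x) (y : ℕ)
    (ω : ℕ → ℝ) (hω : Tendsto ω atTop atTop)
    (hto : Tendsto
      (fun n : ℕ => ((⌊(n : ℝ) ^ (((x : ℝ) - 1) / x) * ω n⌋₊ : ℕ) : ℝ) / n)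
      atTop (nhds 0)) :
    Tendsto
      (fun n : ℕ =>
        probCount n ⌊(n : ℝ) ^ (((x : ℝ) - 1) / x) * ω n⌋₊ x (fun c => y ≤ c))
      atTop (nhds 1) := by
  set t : ℕ → ℕ := fun n => ⌊(n : ℝ) ^ (((x : ℝ) - 1) / x) * ω n⌋₊
  have hμ : Tendsto (fun n => expCount n (t n) x) atTop atTop :=
    tendsto_expCount_floor_atTop hx hω hto
  have hρ : Tendsto (fun n : ℕ => ((n : ℝ) / (n - 1)) ^ (2 * x)) atTop (𝓝 1) := by
    simpa [sub_eq_add_neg] using (tendsto_natCast_div_add_atTop (-1 : ℝ)).pow (2 * x)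
  have hlower : ∀ᶠ n in atTop, 1 - (expCount n (t n) x +
      (((n : ℝ) / (n - 1)) ^ (2 * x) - 1) * expCount n (t n) x ^ 2) / (expCount n (t n) x - y) ^ 2 ≤
        probCount n (t n) x (fun c => y ≤ c) := by
    filter_upwards [eventually_ge_atTop 2, hμ.eventually_gt_atTop (y : ℝ)] with n hn hy
    exact one_sub_div_sq_le_probCount n (t n) x y hn hy
  refine tendsto_of_tendsto_of_tendsto_of_le_of_le' ?_ tendsto_const_nhds hlower
    (Eventually.of_forall fun n => probCount_le_one _ _ _ _)
  simpa using (tendsto_add_sub_one_mul_sq_div_sub_sq (y : ℝ) hμ hρ).const_sub 1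
end

section
/- Let G be a directed multigraph (loops and parallel edges allowed) with a fixed ordering e_1, …, e_m of its edges, and let w_G be the associated vertex weighting. If every vertex of G has (undirected) degree at least δ, where a loop at v contributes one to the degree of v, then w_G(v) ≥ δ for every vertex v of G. -/
namespace DirectedWeight

open scoped Classical

variable {V : Type*}

/-- There is a directed path (possibly empty) from `a` to `b` using the directed edges in
the list `es`. -/
def ReachIn (es : List (V × V)) (a b : V) : Prop :=
  Relation.ReflTransGen (fun u w => (u, w) ∈ es) a b

/-- Auxiliary weight function: the input list holds the edges in *reverse* order (most
recent edge `e_i` first).  Adding the edge `e_i = (x, y)` increases the weight of `x`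
by one and raises the weight of every vertex reachable from `x` to at least the new
weight of `x`. -/
noncomputable def weightAux : List (V × V) → V → ℕ
  | [], _ => 0
  | (x, y) :: es, v =>
      if v = x then weightAux es x + 1
      else if ReachIn ((x, y) :: es) x v then max (weightAux es x + 1) (weightAux es v)
      else weightAux es v

/-- The weight function `w_G` associated to a directed multigraph given by its edge list
`es = [e_1, …, e_m]` (in this order). -/
noncomputable def weight (es : List (V × V)) : V → ℕ := weightAux es.reverse

/-- The (undirected) degree of `v` in the directed multigraph with edge list `es`; a loop
at `v` contributes one. -/
noncomputable def degree (es : List (V × V)) (v : V) : ℕ :=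
  (es.filter fun p => decide (p.1 = v ∨ p.2 = v)).length

end DirectedWeight

/-!
Every weight dominates the degree of some vertex from which it is reachable: for each vertex
`u` there is `z` with a path `z ⇝ u` in `G_i` and `deg_{G_i}(z) ≤ w_{G_i}(u)`. When the edge
`x → y` is added, either it misses `z`, and nothing on either side decreases, or it touches
`z`, so that `x` now reaches `u`; then a witness `z'` for `x` in `G_{i-1}` works for `u`, as
its degree grows by at most one while `w(u) ≥ w_{G_{i-1}}(x) + 1`.
-/

namespace DirectedWeight

variable {V : Type*}

lemma reachIn_cons (e : V × V) {es : List (V × V)} {a b : V} (h : ReachIn es a b) :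
    ReachIn (e :: es) a b :=
  Relation.ReflTransGen.mono (fun _ _ hm => List.mem_cons_of_mem _ hm) _ _ h

lemma reachIn_reverse {es : List (V × V)} {a b : V} : ReachIn es.reverse a b ↔ ReachIn es a b := by
  simp only [ReachIn, List.mem_reverse]

lemma weightAux_le_weightAux_cons (e : V × V) (es : List (V × V)) (v : V) :
    weightAux es v ≤ weightAux (e :: es) v := by
  obtain ⟨x, y⟩ := e
  simp only [weightAux]
  split_ifs with hvx
  · subst hvx; exact Nat.le_succ _
  · exact le_max_right _ _
  · exact le_rfl

lemma weightAux_add_one_le_of_reachIn {x y : V} {es : List (V × V)} {v : V}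
    (h : ReachIn ((x, y) :: es) x v) :
    weightAux es x + 1 ≤ weightAux ((x, y) :: es) v := by
  simp only [weightAux]
  split_ifs with hvx
  · subst hvx; exact le_rfl
  · exact le_max_left _ _

lemma degree_reverse (es : List (V × V)) (v : V) : degree es.reverse v = degree es v := by
  simp only [degree, List.filter_reverse, List.length_reverse]

lemma degree_cons_le (e : V × V) (es : List (V × V)) (v : V) :
    degree (e :: es) v ≤ degree es v + 1 := by
  simp only [degree, List.filter_cons]
  split_ifs <;> simp

lemma degree_cons_of_not_incident {x y v : V} (es : List (V × V)) (h : ¬(x = v ∨ y = v)) :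
    degree ((x, y) :: es) v = degree es v := by
  simp [degree, h]

theorem exists_reachIn_degree_le_weightAux (es : List (V × V)) (u : V) :
    ∃ z, ReachIn es z u ∧ degree es z ≤ weightAux es u := by
  induction es generalizing u with
  | nil => exact ⟨u, .refl, by simp [degree]⟩
  | cons e es ih =>
    obtain ⟨x, y⟩ := e
    obtain ⟨z, hzu, hz⟩ := ih u
    by_cases hinc : x = z ∨ y = z
    · have hxu : ReachIn ((x, y) :: es) x u := by
        rcases hinc with rfl | rfl
        · exact reachIn_cons _ hzu
        · exact (Relation.ReflTransGen.single List.mem_cons_self).trans (reachIn_cons _ hzu)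
      obtain ⟨z', hz'x, hz'⟩ := ih x
      refine ⟨z', (reachIn_cons _ hz'x).trans hxu, ?_⟩
      calc degree ((x, y) :: es) z' ≤ degree es z' + 1 := degree_cons_le _ _ _
        _ ≤ weightAux es x + 1 := by omega
        _ ≤ weightAux ((x, y) :: es) u := weightAux_add_one_le_of_reachIn hxu
    · refine ⟨z, reachIn_cons _ hzu, ?_⟩
      rw [degree_cons_of_not_incident es hinc]
      exact hz.trans (weightAux_le_weightAux_cons _ _ _)

theorem exists_reachIn_degree_le_weight (es : List (V × V)) (u : V) :
    ∃ z, ReachIn es z u ∧ degree es z ≤ weight es u := by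
  obtain ⟨z, hzu, hz⟩ := exists_reachIn_degree_le_weightAux es.reverse u
  exact ⟨z, reachIn_reverse.mp hzu, degree_reverse es z ▸ hz⟩

end DirectedWeight

open DirectedWeight in
/-- **Lemma 13.** If every vertex of a directed multigraph `G` (given by its ordered edge
list `es`, loops and parallel edges allowed) has degree at least `δ`, where a loop
contributes one to the degree, then `w_G(v) ≥ δ` for every vertex `v`. -/
theorem weight_ge_of_min_degree {V : Type*} (es : List (V × V)) (δ : ℕ)
    (hdeg : ∀ v : V, δ ≤ degree es v) :
    ∀ v : V, δ ≤ weight es v := by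
  intro v
  obtain ⟨z, -, hz⟩ := exists_reachIn_degree_le_weight es v
  exact (hdeg z).trans hz
end

section
/- Let G be a multi-hypergraph (not necessarily uniform, parallel edges allowed) with a fixed edge ordering e_1, …, e_m in which each edge e_i has a designated leading vertex x_i ∈ e_i, and let w_G be the associated vertex weighting. If every vertex of G has degree at least δ, then w_G(v) ≥ δ for every vertex v of G. -/
namespace HypergraphWeight

open scoped Classical

variable {V : Type*}

/-- The auxiliary directed graph `graph(G)` of a multi-hypergraph whose edges (with
designated leading vertices) are listed in `es`: there is a directed edge `a → b` iff
some edge `e_i` has leading vertex `x_i = a` and `b ∈ e_i \ {a}`. -/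
def GraphRel (es : List (Finset V × V)) (a b : V) : Prop :=
  ∃ p ∈ es, p.2 = a ∧ b ∈ p.1 ∧ b ≠ a

/-- There is a directed path (possibly empty) from `a` to `b` in `graph(G)`. -/
def ReachIn (es : List (Finset V × V)) (a b : V) : Prop :=
  Relation.ReflTransGen (GraphRel es) a b

/-- Auxiliary weight function: the input list holds the edges (each paired with its
leading vertex) in *reverse* order (most recent edge `e_i` first).  Adding the edge
`e_i` with leading vertex `x_i` increases the weight of `x_i` by one and raises the
weight of every vertex reachable from `x_i` in `graph(G_i)` to at least the new weight
of `x_i`. -/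
noncomputable def weightAux : List (Finset V × V) → V → ℕ
  | [], _ => 0
  | (e, x) :: es, v =>
      if v = x then weightAux es x + 1
      else if ReachIn ((e, x) :: es) x v then max (weightAux es x + 1) (weightAux es v)
      else weightAux es v

/-- The weight function `w_G` associated to a multi-hypergraph given by its edge list
`es = [e_1, …, e_m]` (in this order), each edge carrying a designated leading vertex. -/
noncomputable def weight (es : List (Finset V × V)) : V → ℕ := weightAux es.reverse

/-- The degree of `v` in the multi-hypergraph with edge list `es`. -/
noncomputable def degree (es : List (Finset V × V)) (v : V) : ℕ :=
  (es.filter fun p => decide (v ∈ p.1)).length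

/-! Every vertex `v` is reached in `graph(G)` from a vertex `u` with `deg u ≤ w_G(v)`, which
gives the theorem at once. The invariant survives adding an edge `e` with leader `x`: for
`v = x` the weight grows by one and any degree by at most one; for `v` reachable from `x` the
witness of `x` works; otherwise the old witness `u` of `v` lies outside `e`, because `x`
reaches every vertex of `e`, so neither its degree nor the weight of `v` changes. -/

lemma ReachIn.mono {L L' : List (Finset V × V)} (hLL' : L ⊆ L') {a b : V}
    (h : ReachIn L a b) : ReachIn L' a b :=
  Relation.ReflTransGen.mono (fun _ _ ⟨p, hp, hrel⟩ => ⟨p, hLL' hp, hrel⟩) _ _ h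

lemma ReachIn.cons {q : Finset V × V} {L : List (Finset V × V)} {a b : V}
    (h : ReachIn L a b) : ReachIn (q :: L) a b :=
  h.mono (List.subset_cons_self q L)

lemma reachIn_cons_of_mem {e : Finset V} {x u : V} (L : List (Finset V × V)) (hu : u ∈ e) :
    ReachIn ((e, x) :: L) x u := by
  by_cases hux : u = x
  · exact hux ▸ Relation.ReflTransGen.refl
  · exact Relation.ReflTransGen.single ⟨(e, x), List.mem_cons_self, rfl, hu, hux⟩

lemma degree_cons_le (q : Finset V × V) (L : List (Finset V × V)) (u : V) :
    degree (q :: L) u ≤ degree L u + 1 := by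
  unfold degree
  rw [List.filter_cons]
  split <;> simp

lemma degree_cons_of_notMem {q : Finset V × V} {L : List (Finset V × V)} {u : V}
    (hu : u ∉ q.1) : degree (q :: L) u = degree L u := by
  simp [degree, hu]

lemma degree_reverse (L : List (Finset V × V)) (u : V) :
    degree L.reverse u = degree L u := by
  simp only [degree, List.filter_reverse, List.length_reverse]

lemma weightAux_cons_self (e : Finset V) (x : V) (L : List (Finset V × V)) :
    weightAux ((e, x) :: L) x = weightAux L x + 1 := by
  simp [weightAux]

lemma weightAux_cons_of_reachIn {e : Finset V} {x v : V} {L : List (Finset V × V)}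
    (hvx : v ≠ x) (h : ReachIn ((e, x) :: L) x v) :
    weightAux ((e, x) :: L) v = max (weightAux L x + 1) (weightAux L v) := by
  simp [weightAux, hvx, h]

lemma weightAux_cons_of_not_reachIn {e : Finset V} {x v : V} {L : List (Finset V × V)}
    (h : ¬ReachIn ((e, x) :: L) x v) : weightAux ((e, x) :: L) v = weightAux L v := by
  have hvx : v ≠ x := by rintro rfl; exact h Relation.ReflTransGen.refl
  simp [weightAux, hvx, h]

lemma exists_reachIn_degree_le_weightAux (L : List (Finset V × V)) (v : V) :
    ∃ u, ReachIn L u v ∧ degree L u ≤ weightAux L v := by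
  induction L generalizing v with
  | nil => exact ⟨v, Relation.ReflTransGen.refl, by simp [degree, weightAux]⟩
  | cons q L ih =>
    obtain ⟨e, x⟩ := q
    by_cases hvx : v = x
    · subst hvx
      obtain ⟨u, hreach, hdeg⟩ := ih v
      refine ⟨u, hreach.cons, ?_⟩
      rw [weightAux_cons_self]
      linarith [degree_cons_le (e, v) L u]
    by_cases hxv : ReachIn ((e, x) :: L) x v
    · obtain ⟨u, hreach, hdeg⟩ := ih x
      refine ⟨u, hreach.cons.trans hxv, ?_⟩
      rw [weightAux_cons_of_reachIn hvx hxv]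
      linarith [degree_cons_le (e, x) L u, le_max_left (weightAux L x + 1) (weightAux L v)]
    · obtain ⟨u, hreach, hdeg⟩ := ih v
      have hue : u ∉ e := fun hue => hxv ((reachIn_cons_of_mem L hue).trans hreach.cons)
      refine ⟨u, hreach.cons, ?_⟩
      rwa [weightAux_cons_of_not_reachIn hxv, degree_cons_of_notMem hue]

lemma exists_reachIn_degree_le_weight (L : List (Finset V × V)) (v : V) :
    ∃ u, ReachIn L u v ∧ degree L u ≤ weight L v := by
  obtain ⟨u, hreach, hdeg⟩ := exists_reachIn_degree_le_weightAux L.reverse v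
  exact ⟨u, hreach.mono fun _ => List.mem_reverse.1, degree_reverse L u ▸ hdeg⟩

end HypergraphWeight

open HypergraphWeight in
theorem hypergraph_weight_ge_of_min_degree_general {V : Type*} (es : List (Finset V × V))
    (δ : ℕ)
    (hdeg : ∀ v : V, δ ≤ degree es v) :
    ∀ v : V, δ ≤ weight es v := by
  intro v
  obtain ⟨u, -, hu⟩ := exists_reachIn_degree_le_weight es v
  exact (hdeg u).trans hu

open HypergraphWeight in
/-- **Lemma 15.** Let `G` be a multi-hypergraph (not necessarily uniform, parallel edges
allowed) with ordered edge list `es`, each edge carrying a designated leading vertex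
belonging to it.  If every vertex of `G` has degree at least `δ`, then `w_G(v) ≥ δ` for
every vertex `v`. -/
theorem hypergraph_weight_ge_of_min_degree {V : Type*} (es : List (Finset V × V))
    (hlead : ∀ p ∈ es, p.2 ∈ p.1) (δ : ℕ)
    (hdeg : ∀ v : V, δ ≤ degree es v) :
    ∀ v : V, δ ≤ weight es v :=
  hypergraph_weight_ge_of_min_degree_general es δ hdeg
end

section
/- Let 2 ≤ r < s be integers and let G be an (s, s−r)-starplus on k > s vertices with excess ℓ satisfying ℓ ≤ (r·C(k−s+r, r) − (k−s+r)) / (k−s). Then G is balanced: for every sub-hypergraph G′ ⊆ G with at least s vertices, |E(G′)| / (|V(G′)| − s + r) ≤ |E(G)| / (k − s + r). Moreover, for every induced proper sub-hypergraph G′ with s < |V(G′)| < k the inequality is strict. -/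
namespace SemiRandomHypergraph

/-- `E` is the edge set of an `(s,c)`-starplus of excess `ℓ`: an `s`-uniform hypergraph
obtained from the full `c`-star (all `s`-sets containing a fixed `c`-set `C`, the center)
by adding `ℓ` further edges. -/
def IsStarplus {V : Type*} [Fintype V] [DecidableEq V] (s c ℓ : ℕ)
    (E : Finset (Finset V)) : Prop :=
  (∀ e ∈ E, e.card = s) ∧
  ∃ C : Finset V, C.card = c ∧ (∀ e : Finset V, e.card = s → C ⊆ e → e ∈ E) ∧
    (E.filter fun e => ¬ C ⊆ e).card = ℓ

end SemiRandomHypergraph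

/-- Counting `s`-subsets of `S` containing a fixed subset `C`. -/
lemma SRH_card_supersets {V : Type*} [DecidableEq V] (C S : Finset V) (hCS : C ⊆ S) (s : ℕ)
    (hc : C.card ≤ s) :
    (((Finset.powersetCard s S)).filter (fun e => C ⊆ e)).card
      = (S.card - C.card).choose (s - C.card) := by
  rw [← Finset.card_sdiff_of_subset hCS, ← Finset.card_powersetCard (s - C.card) (S \ C)]
  apply Finset.card_bij' (fun e _ => e \ C) (fun t _ => t ∪ C)
  · intro e he
    simp only [Finset.mem_filter, Finset.mem_powersetCard] at he ⊢
    exact ⟨Finset.sdiff_subset_sdiff he.1.1 le_rfl, by rw [Finset.card_sdiff_of_subset he.2, he.1.2]⟩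
  · intro t ht
    rw [Finset.mem_powersetCard] at ht
    have hdisj : Disjoint t C := Finset.disjoint_of_subset_left ht.1 Finset.sdiff_disjoint
    simp only [Finset.mem_filter, Finset.mem_powersetCard]
    refine ⟨⟨Finset.union_subset (ht.1.trans Finset.sdiff_subset) hCS, ?_⟩,
      Finset.subset_union_right⟩
    rw [Finset.card_union_of_disjoint hdisj, ht.2]
    omega
  · intro e he
    simp only [Finset.mem_filter] at he
    exact Finset.sdiff_union_of_subset he.2
  · intro t ht
    rw [Finset.mem_powersetCard] at ht
    exact Finset.union_sdiff_cancel_right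
      (Finset.disjoint_of_subset_left ht.1 Finset.sdiff_disjoint)

lemma SRH_step_i (q a : ℕ) (hq : 1 ≤ q) (hra : q + 1 < a) :
    a.choose (q + 1) ≤ (a - (q + 1)) * a.choose q := by
  obtain ⟨t, rfl⟩ : ∃ t, a = q + t + 2 := ⟨a - q - 2, by omega⟩
  have hid := Nat.choose_succ_right_eq (q + t + 2) q
  have h2 : q + t + 2 - q = t + 2 := by omega
  rw [h2] at hid
  have h3 : q + t + 2 - (q + 1) = t + 1 := by omega
  rw [h3]
  have h4 : (q + t + 2).choose (q + 1) * (q + 1)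
      ≤ (t + 1) * (q + t + 2).choose q * (q + 1) := by
    rw [hid]
    have : t + 2 ≤ (t + 1) * (q + 1) := by nlinarith
    nlinarith [Nat.choose_pos (show q ≤ q + t + 2 by omega)]
  exact Nat.le_of_mul_le_mul_right h4 (by omega)

lemma SRH_step_ii (q a b : ℕ) (hqa : q ≤ a) (hab : a ≤ b) :
    a.choose (q + 1) + (b - a) * a.choose q ≤ b.choose (q + 1) := by
  induction b with
  | zero => have : a = 0 := by omega
            subst this; simp
  | succ n ih =>
    rcases Nat.lt_or_ge a (n + 1) with h | h
    · have han : a ≤ n := by omega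
      have h1 := ih han
      have hmono : a.choose q ≤ n.choose q := Nat.choose_le_choose _ han
      have hrec : (n + 1).choose (q + 1) = n.choose (q + 1) + n.choose q :=
        (Nat.choose_succ_succ n q).trans (Nat.add_comm _ _)
      have hba : n + 1 - a = (n - a) + 1 := by omega
      rw [hrec, hba, add_mul, one_mul]
      omega
    · have : a = n + 1 := by omega
      subst this; simp

lemma SRH_key_nat_strict (r a b : ℕ) (hr : 2 ≤ r) (hra : r < a) (hab : a < b) :
    (b - r) * a.choose r < (a - r) * b.choose r + (b - a) := by
  obtain ⟨q, rfl⟩ : ∃ q, r = q + 1 := ⟨r - 1, by omega⟩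
  have h1 := SRH_step_i q a (by omega) hra
  have h2 := SRH_step_ii q a b (by omega) (by omega)
  have h3 : (b - a) * a.choose (q + 1) ≤ (b - a) * ((a - (q + 1)) * a.choose q) :=
    Nat.mul_le_mul_left _ h1
  have h4 : (a - (q + 1)) * (a.choose (q + 1) + (b - a) * a.choose q)
      ≤ (a - (q + 1)) * b.choose (q + 1) := Nat.mul_le_mul_left _ h2
  have hsplit : b - (q + 1) = (a - (q + 1)) + (b - a) := by omega
  rw [hsplit, add_mul]
  have hba : 1 ≤ b - a := by omega
  nlinarith

lemma SRH_key_nat (r a b : ℕ) (hr : 2 ≤ r) (hra : r ≤ a) (hab : a ≤ b) :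
    (b - r) * a.choose r ≤ (a - r) * b.choose r + (b - a) := by
  rcases eq_or_lt_of_le hra with h | h
  · subst h
    simp [Nat.choose_self]
  · rcases eq_or_lt_of_le hab with h2 | h2
    · subst h2
      simp
    · exact (SRH_key_nat_strict r a b hr h h2).le

lemma SRH_real_key (r a b ℓ x : ℕ) (hr : 2 ≤ r) (hra : r ≤ a) (hab : a ≤ b) (hrb : r < b)
    (hell : (ℓ : ℝ) * ((b : ℝ) - r) ≤ (r : ℝ) * (b.choose r) - b)
    (hx : x ≤ a.choose r + ℓ) :
    (x : ℝ) / a ≤ ((b.choose r + ℓ : ℕ) : ℝ) / b := by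
  have hapos : (0:ℝ) < a := by
    have : 0 < a := by omega
    exact_mod_cast this
  have hbpos : (0:ℝ) < b := by
    have : 0 < b := by omega
    exact_mod_cast this
  have hbr : (0:ℝ) < (b:ℝ) - r := by
    have : (r:ℝ) < b := by exact_mod_cast hrb
    linarith
  rw [div_le_div_iff₀ hapos hbpos]
  have hkey : ((b:ℝ) - r) * (a.choose r) ≤ ((a:ℝ) - r) * (b.choose r) + ((b:ℝ) - a) := by
    have hh := SRH_key_nat r a b hr hra hab
    have := (Nat.cast_le (α := ℝ)).2 hh
    push_cast [Nat.cast_sub hra, Nat.cast_sub hab, Nat.cast_sub (hra.trans hab)] at this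
    linarith
  have hx' : (x : ℝ) ≤ (a.choose r : ℝ) + ℓ := by exact_mod_cast hx
  have hba : (0:ℝ) ≤ (b:ℝ) - a := by
    have : (a:ℝ) ≤ b := by exact_mod_cast hab
    linarith
  have H : ((a.choose r : ℝ) + ℓ) * b * ((b:ℝ) - r)
      ≤ ((b.choose r : ℝ) + ℓ) * a * ((b:ℝ) - r) := by
    nlinarith [mul_le_mul_of_nonneg_left hell hba, mul_le_mul_of_nonneg_left hkey hbpos.le,
      mul_nonneg (Nat.cast_nonneg ℓ) hbr.le]
  have H2 : ((a.choose r : ℝ) + ℓ) * b ≤ ((b.choose r : ℝ) + ℓ) * a :=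
    le_of_mul_le_mul_right H hbr
  push_cast
  nlinarith [mul_le_mul_of_nonneg_right hx' hbpos.le]

lemma SRH_real_key_strict (r a b ℓ x : ℕ) (hr : 2 ≤ r) (hra : r < a) (hab : a < b)
    (hell : (ℓ : ℝ) * ((b : ℝ) - r) ≤ (r : ℝ) * (b.choose r) - b)
    (hx : x ≤ a.choose r + ℓ) :
    (x : ℝ) / a < ((b.choose r + ℓ : ℕ) : ℝ) / b := by
  have hapos : (0:ℝ) < a := by
    have : 0 < a := by omega
    exact_mod_cast this
  have hbpos : (0:ℝ) < b := by
    have : 0 < b := by omega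
    exact_mod_cast this
  have hbr : (0:ℝ) < (b:ℝ) - r := by
    have : (r:ℝ) < b := by exact_mod_cast (by omega : r < b)
    linarith
  rw [div_lt_div_iff₀ hapos hbpos]
  have hkey : ((b:ℝ) - r) * (a.choose r) < ((a:ℝ) - r) * (b.choose r) + ((b:ℝ) - a) := by
    have hh := SRH_key_nat_strict r a b hr hra hab
    have := (Nat.cast_lt (α := ℝ)).2 hh
    push_cast [Nat.cast_sub hra.le, Nat.cast_sub hab.le, Nat.cast_sub (hra.le.trans hab.le)]
      at this
    linarith
  have hx' : (x : ℝ) ≤ (a.choose r : ℝ) + ℓ := by exact_mod_cast hx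
  have hba : (0:ℝ) ≤ (b:ℝ) - a := by
    have : (a:ℝ) ≤ b := by exact_mod_cast hab.le
    linarith
  have H : ((a.choose r : ℝ) + ℓ) * b * ((b:ℝ) - r)
      < ((b.choose r : ℝ) + ℓ) * a * ((b:ℝ) - r) := by
    nlinarith [mul_le_mul_of_nonneg_left hell hba, mul_lt_mul_of_pos_left hkey hbpos,
      mul_nonneg (Nat.cast_nonneg ℓ) hbr.le]
  have H2 : ((a.choose r : ℝ) + ℓ) * b < ((b.choose r : ℝ) + ℓ) * a :=
    lt_of_mul_lt_mul_right H hbr.le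
  push_cast
  nlinarith [mul_le_mul_of_nonneg_right hx' hbpos.le]

open SemiRandomHypergraph in
/-- **Proposition (Appendix).** Let `2 ≤ r < s` and let `G` be an `(s, s-r)`-starplus on
`k > s` vertices with excess `ℓ ≤ (r C(k-s+r,r) - (k-s+r))/(k-s)`.  Then `G` is
balanced: every sub-hypergraph `G' ⊆ G` with at least `s` vertices satisfies
`|E(G')|/(|V(G')| - s + r) ≤ |E(G)|/(k - s + r)`; moreover for every induced proper
sub-hypergraph with `s < |V(G')| < k` the inequality is strict. -/
theorem starplus_balanced {V : Type*} [Fintype V] [DecidableEq V] (r s k ℓ : ℕ)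
    (hr : 2 ≤ r) (hrs : r < s) (hsk : s < k)
    (E : Finset (Finset V)) (hk : Fintype.card V = k)
    (hstar : IsStarplus s (s - r) ℓ E)
    (hell : (ℓ : ℝ) ≤
      ((r : ℝ) * ((k - s + r).choose r) - ((k : ℝ) - s + r)) / ((k : ℝ) - s)) :
    (∀ (S : Finset V) (E' : Finset (Finset V)), E' ⊆ E → (∀ e ∈ E', e ⊆ S) →
      s ≤ S.card →
      (E'.card : ℝ) / ((S.card : ℝ) - s + r) ≤ (E.card : ℝ) / ((k : ℝ) - s + r)) ∧
    (∀ S : Finset V, s < S.card → S.card < k →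
      ((E.filter fun e => e ⊆ S).card : ℝ) / ((S.card : ℝ) - s + r) <
        (E.card : ℝ) / ((k : ℝ) - s + r)) := by
  obtain ⟨huni, C, hCcard, hfull, hexc⟩ := hstar
  set b := k - s + r with hb
  -- cast identities
  have hcastb : ((k : ℝ) - s + r) = ((b : ℕ) : ℝ) := by
    rw [hb, Nat.cast_add, Nat.cast_sub hsk.le]
  -- the star part of E
  have hEstar : E.filter (fun e => C ⊆ e)
      = (Finset.powersetCard s Finset.univ).filter (fun e => C ⊆ e) := by
    ext e
    simp only [Finset.mem_filter, Finset.mem_powersetCard]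
    constructor
    · rintro ⟨he, hC⟩
      exact ⟨⟨Finset.subset_univ e, huni e he⟩, hC⟩
    · rintro ⟨⟨_, hcard⟩, hC⟩
      exact ⟨hfull e hcard hC, hC⟩
  have hEstarcard : (E.filter (fun e => C ⊆ e)).card = b.choose r := by
    rw [hEstar, SRH_card_supersets C Finset.univ (Finset.subset_univ C) s (by omega)]
    have h1 : (Finset.univ : Finset V).card - C.card = b := by
      rw [Finset.card_univ, hk, hCcard]; omega
    have h2 : s - C.card = r := by rw [hCcard]; omega
    rw [h1, h2]
  have hEcard : E.card = b.choose r + ℓ := by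
    have := Finset.card_filter_add_card_filter_not (s := E) (p := fun e => C ⊆ e)
    omega
  -- convert hell
  have hell' : (ℓ : ℝ) * ((b : ℝ) - r) ≤ (r : ℝ) * (b.choose r) - b := by
    have hden : (0:ℝ) < (k : ℝ) - s := by
      have : (s:ℝ) < k := by exact_mod_cast hsk
      linarith
    have h1 : (ℓ : ℝ) * ((k : ℝ) - s) ≤ (r : ℝ) * (b.choose r) - ((k : ℝ) - s + r) :=
      (le_div_iff₀ hden).1 hell
    have heq : ((k : ℝ) - s) = ((b : ℝ) - r) := by
      rw [hb]; push_cast [Nat.cast_sub hsk.le]; ring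
    rw [heq] at h1
    linarith
  -- the counting bound
  have hbound : ∀ (S : Finset V) (E' : Finset (Finset V)), E' ⊆ E → (∀ e ∈ E', e ⊆ S) →
      s ≤ S.card → E'.card ≤ (S.card - s + r).choose r + ℓ := by
    intro S E' hE'E hE'S hS
    have h1 : (E'.filter fun e => ¬ C ⊆ e).card ≤ ℓ := by
      rw [← hexc]
      exact Finset.card_le_card (Finset.filter_subset_filter _ hE'E)
    have h2 : (E'.filter fun e => C ⊆ e).card ≤ (S.card - s + r).choose r := by
      by_cases hCS : C ⊆ S
      · have hsub : E'.filter (fun e => C ⊆ e)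
            ⊆ (Finset.powersetCard s S).filter (fun e => C ⊆ e) := by
          intro e he
          simp only [Finset.mem_filter, Finset.mem_powersetCard] at he ⊢
          exact ⟨⟨hE'S e he.1, huni e (hE'E he.1)⟩, he.2⟩
        have := Finset.card_le_card hsub
        rw [SRH_card_supersets C S hCS s (by omega)] at this
        have h3 : S.card - C.card = S.card - s + r := by rw [hCcard]; omega
        have h4 : s - C.card = r := by rw [hCcard]; omega
        rwa [h3, h4] at this
      · have hempty : E'.filter (fun e => C ⊆ e) = ∅ :=
          Finset.filter_eq_empty_iff.mpr
            (fun {e} he hC => hCS (hC.trans (hE'S e he)))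
        rw [hempty]
        exact Nat.zero_le _
    have := Finset.card_filter_add_card_filter_not (s := E') (p := fun e => C ⊆ e)
    omega
  constructor
  · intro S E' hE'E hE'S hS
    have hmk : S.card ≤ k := by rw [← hk, ← Finset.card_univ]; exact Finset.card_le_univ S
    set a := S.card - s + r with ha
    have hcasta : ((S.card : ℝ) - s + r) = ((a : ℕ) : ℝ) := by
      rw [ha, Nat.cast_add, Nat.cast_sub hS]
    rw [hcasta, hcastb, hEcard]
    exact_mod_cast SRH_real_key r a b ℓ E'.card hr (by omega) (by omega) (by omega) hell'
      (hbound S E' hE'E hE'S hS)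
  · intro S hS hSk
    have hmk : S.card ≤ k := le_of_lt hSk
    set a := S.card - s + r with ha
    have hcasta : ((S.card : ℝ) - s + r) = ((a : ℕ) : ℝ) := by
      rw [ha, Nat.cast_add, Nat.cast_sub hS.le]
    rw [hcasta, hcastb, hEcard]
    exact_mod_cast SRH_real_key_strict r a b ℓ (E.filter fun e => e ⊆ S).card hr (by omega)
      (by omega) hell'
      (hbound S (E.filter fun e => e ⊆ S) (Finset.filter_subset _ _)
        (fun e he => (Finset.mem_filter.1 he).2) hS.le)
end
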